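/- arXiv:1706.00268 — 5 statements merged into one kernel-verified Lean document; each statement's English description precedes it below -/
import Mathlib

section
/- Let B, C, D be n×n real matrices and x ∈ ℝ^{2n}, b ∈ ℝ^{2n}. Write x = (x₁, x₂) and b = (b₁, b₂) with x₁, x₂, b₁, b₂ ∈ ℝⁿ, and set z = x₁ + i·x₂ ∈ ℂⁿ, p = b₁ + i·b₂ ∈ ℂⁿ, M = (B + D - i(C - Cᵀ))/2, N = (B - D + i(C + Cᵀ))/2. Then the real system [[B, C], [Cᵀ, D]]x = b holds if and only if Mz + N·conj(z) = p. -/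
open Matrix

/-!
Write `z = x₁ + i x₂`, so `conj z = x₁ - i x₂` and `M z + N (conj z) = (M + N) x₁ + i (M - N) x₂`.
Since `M + N = B + i Cᵀ` and `M - N = D - i C`, this is `(B x₁ + C x₂) + i (Cᵀ x₁ + D x₂)`, whose
real and imaginary parts are the two block rows of the real system.
-/

variable {ι : Type*}

def ofReIm (u v : ι → ℝ) : ι → ℂ := fun i => (u i : ℂ) + Complex.I * (v i : ℂ)

theorem ofReIm_eq_ofReIm_iff {u v a b : ι → ℝ} : ofReIm u v = ofReIm a b ↔ u = a ∧ v = b := by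
  simp only [ofReIm, funext_iff, Complex.ext_iff, Complex.add_re, Complex.add_im,
    Complex.ofReal_re, Complex.ofReal_im, Complex.I_mul_re, Complex.I_mul_im]
  simp only [neg_zero, add_zero, zero_add, forall_and]

namespace Matrix

variable [Fintype ι]

theorem mulVec_ofReIm_add_mulVec_star_ofReIm (B C E D : Matrix ι ι ℝ) (x₁ x₂ : ι → ℝ) :
    ((2 : ℂ)⁻¹ • (B.map Complex.ofReal + D.map Complex.ofReal -
        Complex.I • (C.map Complex.ofReal - E.map Complex.ofReal))) *ᵥ ofReIm x₁ x₂ +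
      ((2 : ℂ)⁻¹ • (B.map Complex.ofReal - D.map Complex.ofReal +
        Complex.I • (C.map Complex.ofReal + E.map Complex.ofReal))) *ᵥ star (ofReIm x₁ x₂) =
    ofReIm (B *ᵥ x₁ + C *ᵥ x₂) (E *ᵥ x₁ + D *ᵥ x₂) := by
  funext i
  simp only [ofReIm, Pi.add_apply, mulVec, dotProduct, Pi.star_apply, star_add, star_mul',
    Complex.star_def, Complex.conj_ofReal, Complex.conj_I, smul_apply, add_apply, sub_apply,
    map_apply, smul_eq_mul, Complex.ofReal_add, Complex.ofReal_sum, Complex.ofReal_mul,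
    Finset.mul_sum, ← Finset.sum_add_distrib]
  refine Finset.sum_congr rfl fun j _ => ?_
  linear_combination (-(C i j : ℂ) * x₂ j) * Complex.I_sq

theorem fromBlocks_mulVec_sumElim_eq_iff {R : Type*} [NonUnitalNonAssocSemiring R]
    (B C E D : Matrix ι ι R) (x₁ x₂ b₁ b₂ : ι → R) :
    fromBlocks B C E D *ᵥ Sum.elim x₁ x₂ = Sum.elim b₁ b₂ ↔
      B *ᵥ x₁ + C *ᵥ x₂ = b₁ ∧ E *ᵥ x₁ + D *ᵥ x₂ = b₂ := by
  rw [fromBlocks_mulVec, Sum.elim_eq_iff, Sum.elim_comp_inl, Sum.elim_comp_inr]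

end Matrix

theorem stmt_8 (n : ℕ) (B C D : Matrix (Fin n) (Fin n) ℝ)
    (x₁ x₂ b₁ b₂ : Fin n → ℝ)
    (z p : Fin n → ℂ)
    (hz : z = fun i => (x₁ i : ℂ) + Complex.I * (x₂ i : ℂ))
    (hp : p = fun i => (b₁ i : ℂ) + Complex.I * (b₂ i : ℂ))
    (M N : Matrix (Fin n) (Fin n) ℂ)
    (hM : M = ((2 : ℂ)⁻¹) •
      (B.map Complex.ofReal + D.map Complex.ofReal -
        Complex.I • (C.map Complex.ofReal - Cᵀ.map Complex.ofReal)))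
    (hN : N = ((2 : ℂ)⁻¹) •
      (B.map Complex.ofReal - D.map Complex.ofReal +
        Complex.I • (C.map Complex.ofReal + Cᵀ.map Complex.ofReal))) :
    (Matrix.fromBlocks B C Cᵀ D).mulVec (Sum.elim x₁ x₂) = Sum.elim b₁ b₂ ↔
    M.mulVec z + N.mulVec (star z) = p := by
  change z = ofReIm x₁ x₂ at hz
  change p = ofReIm b₁ b₂ at hp
  rw [fromBlocks_mulVec_sumElim_eq_iff, hz, hp, hM, hN, mulVec_ofReIm_add_mulVec_star_ofReIm,
    ofReIm_eq_ofReIm_iff]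
end

section
/- Let B, C, D be n×n real matrices with B, D symmetric, and set M = (B + D - i(C - Cᵀ))/2 and N = (B - D + i(C + Cᵀ))/2. Then λ ∈ ℝ is an eigenvalue of the complex block matrix [[M, N], [conj(N), conj(M)]] with eigenvector (z, conj(w)) ≠ 0 satisfying z + w ≠ 0 only if λ is an eigenvalue of the real matrix [[B, C], [Cᵀ, D]] with eigenvector (Re(z + w), Im(z + w)). -/
open Matrix

theorem stmt_10 (n : ℕ) (B C D : Matrix (Fin n) (Fin n) ℝ)
    (hB : B.IsSymm) (hD : D.IsSymm)
    (M N : Matrix (Fin n) (Fin n) ℂ)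
    (hM : M = ((2 : ℂ)⁻¹) •
      (B.map Complex.ofReal + D.map Complex.ofReal -
        Complex.I • (C.map Complex.ofReal - Cᵀ.map Complex.ofReal)))
    (hN : N = ((2 : ℂ)⁻¹) •
      (B.map Complex.ofReal - D.map Complex.ofReal +
        Complex.I • (C.map Complex.ofReal + Cᵀ.map Complex.ofReal)))
    (lam : ℝ) (z w : Fin n → ℂ)
    (heig : (Matrix.fromBlocks M N (N.map (starRingEnd ℂ)) (M.map (starRingEnd ℂ))).mulVec
        (Sum.elim z (star w)) = (lam : ℂ) • Sum.elim z (star w))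
    (hne : Sum.elim z (star w) ≠ 0)
    (hzw : z + w ≠ 0) :
    (Matrix.fromBlocks B C Cᵀ D).mulVec
        (Sum.elim (fun i => (z i + w i).re) (fun i => (z i + w i).im)) =
      lam • Sum.elim (fun i => (z i + w i).re) (fun i => (z i + w i).im) := by
  have h1 : ∀ i, (∑ j, M i j * z j) + (∑ j, N i j * (starRingEnd ℂ) (w j)) = (lam : ℂ) * z i := by
    intro i
    have := congrFun heig (Sum.inl i)
    simpa [Matrix.fromBlocks_mulVec, Matrix.mulVec, dotProduct, Pi.star_apply,
      smul_eq_mul, Complex.star_def] using this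
  have h2 : ∀ i, (∑ j, N i j * (starRingEnd ℂ) (z j)) + (∑ j, M i j * w j)
      = (lam : ℂ) * w i := by
    intro i
    have := congrArg (starRingEnd ℂ) (congrFun heig (Sum.inr i))
    simpa [Matrix.fromBlocks_mulVec, Matrix.mulVec, dotProduct, Pi.star_apply,
      smul_eq_mul, Complex.star_def, map_sum, _root_.map_mul, Complex.conj_conj,
      Complex.conj_ofReal] using this
  have key : ∀ i, (∑ j, (M i j * (z j + w j) + N i j * (starRingEnd ℂ) (z j + w j)))
      = (lam : ℂ) * (z i + w i) := by
    intro i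
    simp only [mul_add, map_add, Finset.sum_add_distrib]
    linear_combination h1 i + h2 i
  have hterm : ∀ i j, M i j * (z j + w j) + N i j * (starRingEnd ℂ) (z j + w j) =
      ((B i j * (z j + w j).re + C i j * (z j + w j).im : ℝ) : ℂ) +
      ((C j i * (z j + w j).re + D i j * (z j + w j).im : ℝ) : ℂ) * Complex.I := by
    intro i j
    subst hM hN
    apply Complex.ext <;>
      simp [Matrix.smul_apply, Matrix.sub_apply, Matrix.add_apply, Matrix.map_apply,
        Matrix.transpose_apply, Complex.mul_re, Complex.mul_im, Complex.add_re,
        Complex.add_im] <;> ring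
  have key2 : ∀ i,
      ((∑ j, (B i j * (z j + w j).re + C i j * (z j + w j).im) : ℝ) : ℂ) +
      ((∑ j, (C j i * (z j + w j).re + D i j * (z j + w j).im) : ℝ) : ℂ) * Complex.I
      = (lam : ℂ) * (z i + w i) := by
    intro i
    rw [← key i, Finset.sum_congr rfl (fun j _ => hterm i j)]
    simp [Complex.ofReal_sum, Finset.sum_add_distrib, ← Finset.sum_mul]
  rw [Matrix.fromBlocks_mulVec]
  funext i
  cases i with
  | inl i =>
    have := congrArg Complex.re (key2 i)
    simp [Complex.add_re, Complex.mul_re, Complex.ofReal_re, Complex.ofReal_im] at this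
    simpa [Matrix.mulVec, dotProduct, Finset.sum_add_distrib, smul_eq_mul] using this
  | inr i =>
    have := congrArg Complex.im (key2 i)
    simp [Complex.add_im, Complex.mul_im, Complex.ofReal_re, Complex.ofReal_im] at this
    simpa [Matrix.mulVec, dotProduct, Matrix.transpose_apply, Finset.sum_add_distrib,
      smul_eq_mul] using this
end

section
/- Let A be a 2n×2n Hermitian matrix and M its top-left n×n principal submatrix. Then for each k = 1, …, n, the eigenvalues satisfy λ_k(A) ≤ λ_k(M) ≤ λ_{k+n}(A), where eigenvalues are listed in increasing order (Cauchy interlacing for a principal submatrix of half the size). -/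
/-!
Courant–Fischer argument (eigenvalues indexed from 0). For `M = A.submatrix e e` with `A` of
size `N` and `M` of size `m`, the eigenvectors of `A` for `λ_j(A), …, λ_{N-1}(A)` span a space of
dimension `N - j` on which the Rayleigh quotient of `A` is `≥ λ_j(A)`, and the eigenvectors of `M`
for `λ_0(M), …, λ_k(M)` span a space of dimension `k + 1` on which that of `M` is `≤ λ_k(M)`.
Extending vectors by zero is an isometry carrying the quadratic form of `A` to that of `M`, so when
`j ≤ k` the two spaces share a nonzero vector, whence `λ_j(A) ≤ λ_k(M)`. The other inequality is
the same argument with the roles of the two ends of the spectra exchanged.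
-/

open Matrix

/-- Eigenvalues of a Hermitian matrix listed in increasing order. -/
noncomputable def sortedEigs {m : ℕ} {𝕜 : Type*} [RCLike 𝕜] {A : Matrix (Fin m) (Fin m) 𝕜}
    (hA : A.IsHermitian) : Fin m → ℝ :=
  hA.eigenvalues ∘ Tuple.sort hA.eigenvalues

open Module Submodule RCLike
open scoped InnerProductSpace
variable {𝕜 : Type*} [RCLike 𝕜]

section Rayleigh

variable {ι E : Type*} [NormedAddCommGroup E] [InnerProductSpace 𝕜 E]

theorem Orthonormal.inner_eq_zero_of_mem_span_image {v : ι → E} (hv : Orthonormal 𝕜 v)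
    {s : Set ι} {i : ι} (hi : i ∉ s) {x : E} (hx : x ∈ span 𝕜 (v '' s)) : ⟪v i, x⟫_𝕜 = 0 := by
  refine mem_orthogonal_singleton_iff_inner_right.1 (span_le.2 ?_ hx)
  rintro _ ⟨j, hj, rfl⟩
  exact mem_orthogonal_singleton_iff_inner_right.2
    (hv.inner_eq_zero (ne_of_mem_of_not_mem hj hi).symm)

variable [Fintype ι]

theorem OrthonormalBasis.finrank_span_image (b : OrthonormalBasis ι 𝕜 E) (s : Finset ι) :
    finrank 𝕜 (span 𝕜 (b '' s)) = s.card := by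
  have hb : LinearIndependent 𝕜 fun i : (s : Set ι) => b i :=
    b.orthonormal.linearIndependent.comp _ Subtype.val_injective
  rw [Set.image_eq_range, finrank_span_eq_card hb]
  simp

variable {T : E →ₗ[𝕜] E} (b : OrthonormalBasis ι 𝕜 E) {μ : ι → ℝ}

theorem LinearMap.IsSymmetric.re_inner_apply_self_eq_sum (hT : T.IsSymmetric)
    (hb : ∀ i, T (b i) = (μ i : 𝕜) • b i) (x : E) :
    re ⟪T x, x⟫_𝕜 = ∑ i, μ i * ‖⟪b i, x⟫_𝕜‖ ^ 2 := by
  rw [← b.sum_inner_mul_inner, map_sum]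
  refine Finset.sum_congr rfl fun i _ => ?_
  rw [hT, hb, inner_smul_right, ← inner_conj_symm, mul_assoc, RCLike.conj_mul]
  norm_cast

theorem LinearMap.IsSymmetric.mul_norm_sq_le_re_inner_apply_self (hT : T.IsSymmetric)
    (hb : ∀ i, T (b i) = (μ i : 𝕜) • b i) {s : Set ι} {c : ℝ} (hc : ∀ i ∈ s, c ≤ μ i) {x : E}
    (hx : x ∈ span 𝕜 (b '' s)) : c * ‖x‖ ^ 2 ≤ re ⟪T x, x⟫_𝕜 := by
  rw [hT.re_inner_apply_self_eq_sum b hb, ← b.sum_sq_norm_inner_right, Finset.mul_sum]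
  refine Finset.sum_le_sum fun i _ => ?_
  by_cases hi : i ∈ s
  · exact mul_le_mul_of_nonneg_right (hc i hi) (sq_nonneg _)
  · simp [b.orthonormal.inner_eq_zero_of_mem_span_image hi hx]

theorem LinearMap.IsSymmetric.re_inner_apply_self_le_mul_norm_sq (hT : T.IsSymmetric)
    (hb : ∀ i, T (b i) = (μ i : 𝕜) • b i) {s : Set ι} {c : ℝ} (hc : ∀ i ∈ s, μ i ≤ c) {x : E}
    (hx : x ∈ span 𝕜 (b '' s)) : re ⟪T x, x⟫_𝕜 ≤ c * ‖x‖ ^ 2 := by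
  rw [hT.re_inner_apply_self_eq_sum b hb, ← b.sum_sq_norm_inner_right, Finset.mul_sum]
  refine Finset.sum_le_sum fun i _ => ?_
  by_cases hi : i ∈ s
  · exact mul_le_mul_of_nonneg_right (hc i hi) (sq_nonneg _)
  · simp [b.orthonormal.inner_eq_zero_of_mem_span_image hi hx]

end Rayleigh

theorem Submodule.exists_ne_zero_mem_of_finrank_lt_add {K V W : Type*} [DivisionRing K]
    [AddCommGroup V] [Module K V] [FiniteDimensional K V] [AddCommGroup W] [Module K W]
    (f : W →ₗ[K] V) (hf : Function.Injective f) (S : Submodule K V) (S' : Submodule K W)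
    [FiniteDimensional K S'] (h : finrank K V < finrank K S + finrank K S') :
    ∃ y ∈ S', y ≠ 0 ∧ f y ∈ S := by
  have hmap : finrank K (S'.map f) = finrank K S' := (equivMapOfInjective f hf S').finrank_eq.symm
  have hinf : S ⊓ S'.map f ≠ ⊥ := by
    intro hbot
    have := finrank_sup_add_finrank_inf_eq S (S'.map f)
    rw [hbot, finrank_bot, hmap] at this
    have := (S ⊔ S'.map f).finrank_le
    omega
  obtain ⟨_, ⟨hS, y, hy, rfl⟩, hne⟩ := exists_mem_ne_zero_of_ne_bot hinf
  exact ⟨y, hy, fun h0 => hne (by rw [h0, map_zero]), hS⟩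

theorem Function.Injective.sum_mul_extend_zero {R ι κ : Type*} [NonUnitalNonAssocSemiring R]
    [Fintype ι] [Fintype κ] {e : ι → κ} (he : Function.Injective e) (g : κ → R) (y : ι → R) :
    ∑ k, g k * Function.extend e y 0 k = ∑ i, g (e i) * y i := by
  refine (Fintype.sum_of_injective e he _ _ (fun k hk => ?_) fun i => by rw [he.extend_apply]).symm
  rw [Function.extend_apply' _ _ _ (by simpa using hk), Pi.zero_apply, mul_zero]

namespace EuclideanSpace

variable {ι κ : Type*} [Fintype ι] [Fintype κ] (e : ι ↪ κ)

noncomputable def extendByZero : EuclideanSpace 𝕜 ι →ₗᵢ[𝕜] EuclideanSpace 𝕜 κ :=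
  LinearMap.isometryOfInner
    ((WithLp.linearEquiv 2 𝕜 (κ → 𝕜)).symm.toLinearMap ∘ₗ Function.ExtendByZero.linearMap 𝕜 e ∘ₗ
      (WithLp.linearEquiv 2 𝕜 (ι → 𝕜)).toLinearMap)
    fun y z => by
      simp only [PiLp.inner_apply, RCLike.inner_apply']
      simp [e.injective.sum_mul_extend_zero, e.injective.extend_apply]

theorem extendByZero_apply (y : EuclideanSpace 𝕜 ι) (k : κ) :
    extendByZero e y k = Function.extend e y 0 k :=
  rfl

variable [DecidableEq ι] [DecidableEq κ]

theorem toEuclideanLin_extendByZero_apply (A : Matrix κ κ 𝕜) (y : EuclideanSpace 𝕜 ι) (i : ι) :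
    toEuclideanLin A (extendByZero e y) (e i) = toEuclideanLin (A.submatrix e e) y i :=
  e.injective.sum_mul_extend_zero _ _

theorem inner_toEuclideanLin_extendByZero (A : Matrix κ κ 𝕜) (y : EuclideanSpace 𝕜 ι) :
    ⟪toEuclideanLin A (extendByZero e y), extendByZero e y⟫_𝕜 =
      ⟪toEuclideanLin (A.submatrix e e) y, y⟫_𝕜 := by
  simp only [PiLp.inner_apply, RCLike.inner_apply', extendByZero_apply,
    e.injective.sum_mul_extend_zero]
  simp only [toEuclideanLin_extendByZero_apply]

end EuclideanSpace

namespace Matrix.IsHermitian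

section SortedEigenvectorBasis

variable {m : ℕ} {A : Matrix (Fin m) (Fin m) 𝕜} (hA : A.IsHermitian)

noncomputable def sortedEigenvectorBasis : OrthonormalBasis (Fin m) 𝕜 (EuclideanSpace 𝕜 (Fin m)) :=
  hA.eigenvectorBasis.reindex (Tuple.sort hA.eigenvalues).symm

theorem toEuclideanLin_sortedEigenvectorBasis (i : Fin m) :
    toEuclideanLin A (hA.sortedEigenvectorBasis i) =
      (sortedEigs hA i : 𝕜) • hA.sortedEigenvectorBasis i := by
  ext j
  simp only [sortedEigenvectorBasis, OrthonormalBasis.reindex_apply, Equiv.symm_symm,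
    toLpLin_apply, PiLp.smul_apply]
  rw [hA.mulVec_eigenvectorBasis, Pi.smul_apply, RCLike.real_smul_eq_coe_smul (K := 𝕜)]
  rfl

theorem sortedEigs_mul_norm_sq_le {j : Fin m} {x : EuclideanSpace 𝕜 (Fin m)}
    (hx : x ∈ span 𝕜 (hA.sortedEigenvectorBasis '' Finset.Ici j)) :
    sortedEigs hA j * ‖x‖ ^ 2 ≤ re ⟪toEuclideanLin A x, x⟫_𝕜 :=
  (isSymmetric_toEuclideanLin_iff.2 hA).mul_norm_sq_le_re_inner_apply_self _
    hA.toEuclideanLin_sortedEigenvectorBasis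
    (fun _ hi => Tuple.monotone_sort _ (Finset.mem_Ici.1 hi)) hx

theorem re_inner_le_sortedEigs_mul_norm_sq {j : Fin m} {x : EuclideanSpace 𝕜 (Fin m)}
    (hx : x ∈ span 𝕜 (hA.sortedEigenvectorBasis '' Finset.Iic j)) :
    re ⟪toEuclideanLin A x, x⟫_𝕜 ≤ sortedEigs hA j * ‖x‖ ^ 2 :=
  (isSymmetric_toEuclideanLin_iff.2 hA).re_inner_apply_self_le_mul_norm_sq _
    hA.toEuclideanLin_sortedEigenvectorBasis
    (fun _ hi => Tuple.monotone_sort _ (Finset.mem_Iic.1 hi)) hx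

end SortedEigenvectorBasis

section Interlacing

open EuclideanSpace

variable {N m : ℕ} {A : Matrix (Fin N) (Fin N) 𝕜} (hA : A.IsHermitian) (e : Fin m ↪ Fin N)
  (hM : (A.submatrix e e).IsHermitian)

theorem sortedEigs_le_sortedEigs_submatrix {j : Fin N} {k : Fin m} (hjk : (j : ℕ) ≤ k) :
    sortedEigs hA j ≤ sortedEigs hM k := by
  obtain ⟨y, hyM, hy0, hyA⟩ := exists_ne_zero_mem_of_finrank_lt_add
    (extendByZero e).toLinearMap (extendByZero (𝕜 := 𝕜) e).injective
    (span 𝕜 (hA.sortedEigenvectorBasis '' Finset.Ici j))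
    (span 𝕜 (hM.sortedEigenvectorBasis '' Finset.Iic k))
    (by simp only [OrthonormalBasis.finrank_span_image, finrank_euclideanSpace_fin,
      Fin.card_Ici, Fin.card_Iic]; omega)
  refine le_of_mul_le_mul_right ?_ (by positivity : 0 < ‖y‖ ^ 2)
  calc sortedEigs hA j * ‖y‖ ^ 2 = sortedEigs hA j * ‖extendByZero e y‖ ^ 2 := by
        rw [LinearIsometry.norm_map]
    _ ≤ re ⟪toEuclideanLin A (extendByZero e y), extendByZero e y⟫_𝕜 :=
        hA.sortedEigs_mul_norm_sq_le hyA
    _ = re ⟪toEuclideanLin (A.submatrix e e) y, y⟫_𝕜 := by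
        rw [inner_toEuclideanLin_extendByZero]
    _ ≤ sortedEigs hM k * ‖y‖ ^ 2 := hM.re_inner_le_sortedEigs_mul_norm_sq hyM

theorem sortedEigs_submatrix_le_sortedEigs {k : Fin m} {j : Fin N} (hkj : k + N ≤ j + m) :
    sortedEigs hM k ≤ sortedEigs hA j := by
  obtain ⟨y, hyM, hy0, hyA⟩ := exists_ne_zero_mem_of_finrank_lt_add
    (extendByZero e).toLinearMap (extendByZero (𝕜 := 𝕜) e).injective
    (span 𝕜 (hA.sortedEigenvectorBasis '' Finset.Iic j))
    (span 𝕜 (hM.sortedEigenvectorBasis '' Finset.Ici k))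
    (by simp only [OrthonormalBasis.finrank_span_image, finrank_euclideanSpace_fin,
      Fin.card_Ici, Fin.card_Iic]; omega)
  refine le_of_mul_le_mul_right ?_ (by positivity : 0 < ‖y‖ ^ 2)
  calc sortedEigs hM k * ‖y‖ ^ 2 ≤ re ⟪toEuclideanLin (A.submatrix e e) y, y⟫_𝕜 :=
        hM.sortedEigs_mul_norm_sq_le hyM
    _ = re ⟪toEuclideanLin A (extendByZero e y), extendByZero e y⟫_𝕜 := by
        rw [inner_toEuclideanLin_extendByZero]
    _ ≤ sortedEigs hA j * ‖extendByZero e y‖ ^ 2 := hA.re_inner_le_sortedEigs_mul_norm_sq hyA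
    _ = sortedEigs hA j * ‖y‖ ^ 2 := by rw [LinearIsometry.norm_map]

end Interlacing

end Matrix.IsHermitian

theorem stmt_11 (n : ℕ) (A : Matrix (Fin (n + n)) (Fin (n + n)) ℂ)
    (hA : A.IsHermitian)
    (M : Matrix (Fin n) (Fin n) ℂ)
    (hMdef : ∀ i j : Fin n, M i j = A (Fin.castAdd n i) (Fin.castAdd n j))
    (hM : M.IsHermitian) :
    ∀ k : Fin n,
      sortedEigs hA (Fin.castAdd n k) ≤ sortedEigs hM k ∧
      sortedEigs hM k ≤ sortedEigs hA (Fin.natAdd n k) := by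
  obtain rfl : M = A.submatrix (Fin.castAddEmb n) (Fin.castAddEmb n) := Matrix.ext hMdef
  intro k
  exact ⟨hA.sortedEigs_le_sortedEigs_submatrix _ hM (by simp),
    hA.sortedEigs_submatrix_le_sortedEigs _ hM (by simp; omega)⟩
end

section
/- Let M, N be n×n complex matrices and suppose that the block matrix [[M, N], [conj(N), conj(M)]] is invertible. Then setting U = I and V = -N·conj(M)⁻¹ (assuming M invertible), one has UN + V·conj(M) = 0 and the map z ↦ Uz + V·conj(z) is injective on ℂⁿ. -/
open Matrix

lemma map_mulVec_star' {n : ℕ} (A : Matrix (Fin n) (Fin n) ℂ) (v : Fin n → ℂ) :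
    (A.map (starRingEnd ℂ)).mulVec (star v) = star (A.mulVec v) := by
  funext i
  simp [Matrix.mulVec, dotProduct, Pi.star_apply, map_sum]

lemma map_inv' {n : ℕ} (A : Matrix (Fin n) (Fin n) ℂ) (hA : IsUnit A) :
    (A.map (starRingEnd ℂ))⁻¹ = A⁻¹.map (starRingEnd ℂ) := by
  apply Matrix.inv_eq_right_inv
  rw [← Matrix.map_mul, Matrix.mul_nonsing_inv _ ((Matrix.isUnit_iff_isUnit_det A).mp hA)]
  simp

theorem stmt_16 (n : ℕ) (M N : Matrix (Fin n) (Fin n) ℂ)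
    (hM : IsUnit M)
    (hblock : IsUnit (Matrix.fromBlocks M N (N.map (starRingEnd ℂ)) (M.map (starRingEnd ℂ)))) :
    (1 : Matrix (Fin n) (Fin n) ℂ) * N +
        (-(N * (M.map (starRingEnd ℂ))⁻¹)) * M.map (starRingEnd ℂ) = 0 ∧
    Function.Injective (fun z : Fin n → ℂ =>
      (1 : Matrix (Fin n) (Fin n) ℂ).mulVec z +
        (-(N * (M.map (starRingEnd ℂ))⁻¹)).mulVec (star z)) := by
  have hMd : IsUnit M.det := (Matrix.isUnit_iff_isUnit_det M).mp hM
  have hC : IsUnit (M.map (starRingEnd ℂ)) := by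
    rw [Matrix.isUnit_iff_isUnit_det,
      show M.map ⇑(starRingEnd ℂ) = (starRingEnd ℂ).mapMatrix M from rfl, ← RingHom.map_det]
    exact hMd.map _
  have hCd : IsUnit (M.map (starRingEnd ℂ)).det := (Matrix.isUnit_iff_isUnit_det _).mp hC
  set C := M.map (starRingEnd ℂ) with hCdef
  constructor
  · rw [one_mul, neg_mul, Matrix.mul_assoc, Matrix.nonsing_inv_mul _ hCd, Matrix.mul_one,
      add_neg_cancel]
  · intro z1 z2 h
    simp only [Matrix.one_mulVec, Matrix.neg_mulVec] at h
    set w := z1 - z2 with hw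
    have hker : w = (N * C⁻¹).mulVec (star w) := by
      have key : z1 - z2 = (N * C⁻¹).mulVec (star z1) - (N * C⁻¹).mulVec (star z2) := by
        linear_combination (norm := module) h
      rw [← Matrix.mulVec_sub, ← star_sub] at key
      rw [hw]
      exact key
    set x := M⁻¹.mulVec w with hx
    set u := C⁻¹.mulVec (star w) with hu
    have hxu : star x = u := by
      rw [hx, hu, hCdef, map_inv' M hM, map_mulVec_star']
    have hMx : M.mulVec x = w := by
      rw [hx, Matrix.mulVec_mulVec, Matrix.mul_nonsing_inv _ hMd, Matrix.one_mulVec]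
    have hNu : N.mulVec u = w := by
      rw [hu, Matrix.mulVec_mulVec, ← hker]
    have h1 : M.mulVec x + N.mulVec (-u) = 0 := by
      rw [Matrix.mulVec_neg, hMx, hNu, add_neg_cancel]
    have h2 : (N.map (starRingEnd ℂ)).mulVec x + C.mulVec (-u) = 0 := by
      have hx' : x = star u := by rw [← hxu, star_star]
      have hA : (N.map (starRingEnd ℂ)).mulVec x = star w := by
        rw [hx', map_mulVec_star', hNu]
      have hB : C.mulVec u = star w := by
        rw [← hxu, hCdef, map_mulVec_star', hMx]
      rw [Matrix.mulVec_neg, hA, hB, add_neg_cancel]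
    have hv : (Matrix.fromBlocks M N (N.map (starRingEnd ℂ)) C).mulVec (Sum.elim x (-u)) = 0 := by
      rw [Matrix.fromBlocks_mulVec]
      funext i
      cases i <;> simp [h1, h2]
    have hbd : IsUnit (Matrix.fromBlocks M N (N.map (starRingEnd ℂ)) C).det :=
      (Matrix.isUnit_iff_isUnit_det _).mp hblock
    have hzero : Sum.elim x (-u) = (0 : Fin n ⊕ Fin n → ℂ) := by
      have := congrArg ((Matrix.fromBlocks M N (N.map (starRingEnd ℂ)) C)⁻¹).mulVec hv
      rwa [Matrix.mulVec_mulVec, Matrix.nonsing_inv_mul _ hbd, Matrix.one_mulVec,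
        Matrix.mulVec_zero] at this
    have hx0 : x = 0 := by
      funext i
      exact congrFun hzero (Sum.inl i)
    have hw0 : w = 0 := by rw [← hMx, hx0, Matrix.mulVec_zero]
    exact sub_eq_zero.mp hw0
end

section
/- Let A = [[B, C], [Cᵀ, D]] be a 2n×2n real symmetric positive definite matrix and define M = (B + D - i(C - Cᵀ))/2, N = (B - D + i(C + Cᵀ))/2. Then the complex block matrix [[M, N], [conj(N), conj(M)]] is invertible, and hence for every p ∈ ℂⁿ the equation Mz + N·conj(z) = p has a unique solution. -/
open Matrix

lemma conj_mulVec {n : ℕ} (M : Matrix (Fin n) (Fin n) ℂ) (z : Fin n → ℂ) :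
    (M.map (starRingEnd ℂ)).mulVec (star z) = star (M.mulVec z) := by
  ext i
  simp [Matrix.mulVec, dotProduct, map_sum]

set_option maxHeartbeats 1000000 in
theorem stmt_18 (n : ℕ) (B C D : Matrix (Fin n) (Fin n) ℝ)
    (hB : B.IsSymm) (hD : D.IsSymm)
    (hA : (Matrix.fromBlocks B C Cᵀ D).PosDef)
    (M N : Matrix (Fin n) (Fin n) ℂ)
    (hM : M = ((2 : ℂ)⁻¹) •
      (B.map Complex.ofReal + D.map Complex.ofReal -
        Complex.I • (C.map Complex.ofReal - Cᵀ.map Complex.ofReal)))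
    (hN : N = ((2 : ℂ)⁻¹) •
      (B.map Complex.ofReal - D.map Complex.ofReal +
        Complex.I • (C.map Complex.ofReal + Cᵀ.map Complex.ofReal))) :
    IsUnit (Matrix.fromBlocks M N (N.map (starRingEnd ℂ)) (M.map (starRingEnd ℂ))) ∧
    ∀ p : Fin n → ℂ, ∃! z : Fin n → ℂ, M.mulVec z + N.mulVec (star z) = p := by
  set c := starRingEnd ℂ with hc
  set Bc := B.map (Complex.ofReal : ℝ → ℂ) with hBc
  set Cc := C.map (Complex.ofReal : ℝ → ℂ) with hCc
  set Ctc := Cᵀ.map (Complex.ofReal : ℝ → ℂ) with hCtc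
  set Dc := D.map (Complex.ofReal : ℝ → ℂ) with hDc
  set 𝔸 := Matrix.fromBlocks Bc Cc Ctc Dc with h𝔸
  have hMc : M.map c = ((2 : ℂ)⁻¹) • (Bc + Dc + Complex.I • (Cc - Ctc)) := by
    subst hM
    ext i j
    simp [Bc, Cc, Ctc, Dc, Matrix.map_apply, c, Complex.conj_ofReal, map_ofNat, map_inv₀]
    try ring
  have hNc : N.map c = ((2 : ℂ)⁻¹) • (Bc - Dc - Complex.I • (Cc + Ctc)) := by
    subst hN
    ext i j
    simp [Bc, Cc, Ctc, Dc, Matrix.map_apply, c, Complex.conj_ofReal, map_ofNat, map_inv₀]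
    try ring
  set P : Matrix (Fin n ⊕ Fin n) (Fin n ⊕ Fin n) ℂ :=
    Matrix.fromBlocks 1 (Complex.I • 1) 1 (-(Complex.I • 1)) with hP
  set Q : Matrix (Fin n ⊕ Fin n) (Fin n ⊕ Fin n) ℂ :=
    Matrix.fromBlocks 1 1 (-(Complex.I • 1)) (Complex.I • 1) with hQ
  have hPQ : P * Q = (2 : ℂ) • 1 := by
    rw [hP, hQ, Matrix.fromBlocks_multiply, ← Matrix.fromBlocks_one,
      Matrix.fromBlocks_smul]
    refine Matrix.fromBlocks_inj.mpr ⟨?_, ?_, ?_, ?_⟩ <;>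
      simp [Matrix.smul_mul, Matrix.mul_smul, smul_smul, Complex.I_mul_I, two_smul]
  have hQP : Q * P = (2 : ℂ) • 1 := by
    rw [hP, hQ, Matrix.fromBlocks_multiply, ← Matrix.fromBlocks_one,
      Matrix.fromBlocks_smul]
    refine Matrix.fromBlocks_inj.mpr ⟨?_, ?_, ?_, ?_⟩ <;>
      simp [Matrix.smul_mul, Matrix.mul_smul, smul_smul, Complex.I_mul_I, two_smul]
  have hPunit : IsUnit P :=
    isUnit_iff_exists.mpr ⟨(2:ℂ)⁻¹ • Q,
      by rw [Matrix.mul_smul, hPQ, smul_smul]; norm_num,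
      by rw [Matrix.smul_mul, hQP, smul_smul]; norm_num⟩
  have hQunit : IsUnit Q :=
    isUnit_iff_exists.mpr ⟨(2:ℂ)⁻¹ • P,
      by rw [Matrix.mul_smul, hQP, smul_smul]; norm_num,
      by rw [Matrix.smul_mul, hPQ, smul_smul]; norm_num⟩
  have h𝔸unit : IsUnit 𝔸 := by
    rw [Matrix.isUnit_iff_isUnit_det]
    have h1 : 𝔸 = (Complex.ofRealHom : ℝ →+* ℂ).mapMatrix (Matrix.fromBlocks B C Cᵀ D) := by
      rw [RingHom.mapMatrix_apply, Matrix.fromBlocks_map]; rfl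
    rw [h1, ← RingHom.map_det]
    simpa using hA.det_pos.ne'
  have hKeq : Matrix.fromBlocks M N (N.map c) (M.map c) = (2 : ℂ)⁻¹ • (P * 𝔸 * Q) := by
    rw [hP, hQ, h𝔸, Matrix.fromBlocks_multiply, Matrix.fromBlocks_multiply,
      Matrix.fromBlocks_smul, hMc, hNc, hM, hN]
    refine Matrix.fromBlocks_inj.mpr ⟨?_, ?_, ?_, ?_⟩ <;>
    · simp only [Matrix.smul_mul, Matrix.mul_smul, Matrix.one_mul, Matrix.mul_one,
        Matrix.mul_neg, Matrix.neg_mul, smul_neg, neg_smul, smul_smul, Complex.I_mul_I,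
        neg_neg, one_smul, neg_one_smul]
      match_scalars <;> simp [Complex.I_sq] <;> ring
  have hKunit : IsUnit (Matrix.fromBlocks M N (N.map c) (M.map c)) := by
    rw [hKeq]
    have h1 : (2 : ℂ)⁻¹ • (P * 𝔸 * Q) = ((2 : ℂ)⁻¹ • 1) * (P * 𝔸 * Q) := by
      rw [Matrix.smul_mul, Matrix.one_mul]
    rw [h1]
    have hs : IsUnit ((2:ℂ)⁻¹ • (1 : Matrix (Fin n ⊕ Fin n) (Fin n ⊕ Fin n) ℂ)) :=
      isUnit_iff_exists.mpr ⟨(2:ℂ) • 1,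
        by rw [Matrix.smul_mul, Matrix.mul_smul, smul_smul, Matrix.one_mul]; norm_num,
        by rw [Matrix.smul_mul, Matrix.mul_smul, smul_smul, Matrix.one_mul]; norm_num⟩
    exact hs.mul ((hPunit.mul h𝔸unit).mul hQunit)
  refine ⟨hKunit, ?_⟩
  set K := Matrix.fromBlocks M N (N.map c) (M.map c) with hK
  have hdet : IsUnit K.det := (Matrix.isUnit_iff_isUnit_det K).mp hKunit
  have hinj : Function.Injective K.mulVec := by
    intro a b hab
    have h2 : (K⁻¹ * K).mulVec a = (K⁻¹ * K).mulVec b := by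
      rw [← Matrix.mulVec_mulVec, ← Matrix.mulVec_mulVec, hab]
    rwa [Matrix.nonsing_inv_mul K hdet, Matrix.one_mulVec, Matrix.one_mulVec] at h2
  have hblock : ∀ a b : Fin n → ℂ, K.mulVec (Sum.elim a b) =
      Sum.elim (M.mulVec a + N.mulVec b)
        ((N.map c).mulVec a + (M.map c).mulVec b) := by
    intro a b
    rw [hK, Matrix.fromBlocks_mulVec]
    simp
  intro p
  have hsol : ∀ w : Fin n → ℂ, M.mulVec w + N.mulVec (star w) = p →
      K.mulVec (Sum.elim w (star w)) = Sum.elim p (star p) := by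
    intro w hw
    rw [hblock]
    have e1 : (N.map c).mulVec w = star (N.mulVec (star w)) := by
      have h := conj_mulVec N (star w); rwa [star_star] at h
    have e2 : (M.map c).mulVec (star w) = star (M.mulVec w) := conj_mulVec M w
    rw [e1, e2]
    have hstar : star (N.mulVec (star w)) + star (M.mulVec w) = star p := by
      rw [← star_add, add_comm]; exact congrArg star hw
    funext x
    cases x with
    | inl i => simpa using congrFun hw i
    | inr i => simpa using congrFun hstar i
  -- existence of a solution
  set v := K⁻¹.mulVec (Sum.elim p (star p)) with hv
  have hKv : K.mulVec v = Sum.elim p (star p) := by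
    rw [hv, Matrix.mulVec_mulVec, Matrix.mul_nonsing_inv K hdet, Matrix.one_mulVec]
  set z := v ∘ Sum.inl with hz
  set y := v ∘ Sum.inr with hy
  have hvsplit : v = Sum.elim z y := by ext (i | i) <;> rfl
  have hKvE : K.mulVec (Sum.elim z y) = Sum.elim p (star p) := by
    rw [← hvsplit]; exact hKv
  have hKvB := hKvE
  rw [hblock] at hKvB
  have h1 : M.mulVec z + N.mulVec y = p := by
    funext i; have h := congrFun hKvB (Sum.inl i); simpa using h
  have h2 : (N.map c).mulVec z + (M.map c).mulVec y = star p := by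
    funext i; have h := congrFun hKvB (Sum.inr i); simpa using h
  have h2' : N.mulVec (star z) + M.mulVec (star y) = p := by
    have e1 : (N.map c).mulVec z = star (N.mulVec (star z)) := by
      have h := conj_mulVec N (star z); rwa [star_star] at h
    have e2 : (M.map c).mulVec y = star (M.mulVec (star y)) := by
      have h := conj_mulVec M (star y); rwa [star_star] at h
    rw [e1, e2, ← star_add] at h2
    have h3 := congrArg star h2
    rwa [star_star, star_star] at h3
  have hKv' : K.mulVec (Sum.elim (star y) (star z)) = Sum.elim p (star p) := by
    rw [hblock]
    have e1 : (N.map c).mulVec (star y) = star (N.mulVec y) := conj_mulVec N y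
    have e2 : (M.map c).mulVec (star z) = star (M.mulVec z) := conj_mulVec M z
    rw [e1, e2]
    have ha : M.mulVec (star y) + N.mulVec (star z) = p := by
      rw [add_comm]; exact h2'
    have hb : star (N.mulVec y) + star (M.mulVec z) = star p := by
      rw [← star_add, add_comm]; exact congrArg star h1
    funext x
    cases x with
    | inl i => simpa using congrFun ha i
    | inr i => simpa using congrFun hb i
  have heq : Sum.elim (star y) (star z) = Sum.elim z y :=
    hinj (hKv'.trans hKvE.symm)
  have hy_eq : star z = y := funext fun i => congrFun heq (Sum.inr i)
  refine ⟨z, ?_, ?_⟩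
  · show M.mulVec z + N.mulVec (star z) = p
    rw [hy_eq]; exact h1
  · intro w hw
    have h4 : Sum.elim w (star w) = Sum.elim z y :=
      hinj ((hsol w hw).trans hKvE.symm)
    funext i
    exact congrFun h4 (Sum.inl i)
end
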